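/- There exist positive constants a and b such that for all sufficiently large n, any partition of E(K_n) into C₄-free bipartite graphs requires at least a·√n parts, and there exists such a partition with at most b·√n·log n parts. -/

import Mathlib

open SimpleGraph

/-- The graph `2K₂`: two disjoint edges, on vertices {0,1} and {2,3}. -/
def twoK2 : SimpleGraph (Fin 4) where
  Adj i j := i ≠ j ∧ i.val / 2 = j.val / 2
  symm := by constructor; decide
  loopless := by constructor; decide

/-- The path `P₃` on 3 vertices. -/
def pathP3 : SimpleGraph (Fin 3) where
  Adj i j := i.val + 1 = j.val ∨ j.val + 1 = i.val
  symm := by constructor; decide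
  loopless := by constructor; decide

/-- The path `P₄` on 4 vertices. -/
def pathP4 : SimpleGraph (Fin 4) where
  Adj i j := i.val + 1 = j.val ∨ j.val + 1 = i.val
  symm := by constructor; decide
  loopless := by constructor; decide

/-- The cycle `C₄` on 4 vertices. -/
def cycleC4 : SimpleGraph (Fin 4) where
  Adj i j := (i.val + 1) % 4 = j.val ∨ (j.val + 1) % 4 = i.val
  symm := by constructor; decide
  loopless := by constructor; decide

/-- The star `S₄ = K_{1,3}` on 4 vertices, with center 0. -/
def starS4 : SimpleGraph (Fin 4) where
  Adj i j := i ≠ j ∧ (i = 0 ∨ j = 0)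
  symm := by constructor; decide
  loopless := by constructor; decide

/-- The graph `K₂ + K₁`: an edge plus an isolated vertex. -/
def K2plusK1 : SimpleGraph (Fin 3) where
  Adj i j := (i = 0 ∧ j = 1) ∨ (i = 1 ∧ j = 0)
  symm := by constructor; decide
  loopless := by constructor; decide

/-- `G` avoids `H`: `H` is not an induced subgraph of `G` restricted to its
support (the vertices incident to an edge), matching the convention that
template graphs have no isolated vertices. -/
def Avoids {α β : Type} (G : SimpleGraph α) (H : SimpleGraph β) : Prop :=
  IsEmpty (H ↪g (G.induce G.support))

/-- `P` is a partition of the edge set of the complete graph `K_n` into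
bipartite graphs: every template is 2-colorable, and every edge of `K_n`
belongs to exactly one template. -/
def IsBipartitePartition (n k : ℕ) (P : Fin k → SimpleGraph (Fin n)) : Prop :=
  (∀ i, (P i).Colorable 2) ∧
    ∀ e ∈ (⊤ : SimpleGraph (Fin n)).edgeSet, ∃! i, e ∈ (P i).edgeSet

/-!
A bipartite graph with two vertices sharing two neighbours contains an induced `C₄`, so in every
part of a `C₄`-avoiding bipartite partition any two vertices have at most one common neighbour.
Double counting cherries and Cauchy–Schwarz then bound each part by `n^{3/2}` edges, while `K_n`
has `n(n-1)/2` of them: at least `√n / 4` parts are needed.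

For the construction take a prime `p` with `n ≤ p² ≤ 4n`. An edge `{a, b}` lives at level `i`,
the highest binary digit in which `a` and `b` differ, where it joins the two halves of a dyadic
block of length `2^(i+1)`. Reading the offsets `a mod 2^i`, `b mod 2^i` as points of
`(ZMod p)²`, colour the edge by the translate `y = x² + c` of the parabola that contains the
difference of the offsets (upper minus lower). Translates of a parabola are Sidon sets, so no
colour class contains a `C₄`, and there are `(log₂ n + 1) · p = O(√n log n)` classes.
-/

open Finset

theorem not_avoids_of_embedding {V W : Type} {G : SimpleGraph V} {H : SimpleGraph W}
    (f : H ↪g G) (hH : ∀ a, ∃ b, H.Adj a b) : ¬ Avoids G H := fun hav =>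
  hav.false ⟨⟨fun a => ⟨f a, let ⟨b, hab⟩ := hH a; G.mem_support.2 ⟨f b, f.map_rel_iff.2 hab⟩⟩,
    fun _ _ hab => f.injective (congrArg Subtype.val hab)⟩, f.map_rel_iff⟩

theorem commonNeighbors_subsingleton_of_avoids_cycleC4 {V : Type} {G : SimpleGraph V}
    (hcol : G.Colorable 2) (hav : Avoids G cycleC4) {x y : V} (hxy : x ≠ y) :
    (G.commonNeighbors x y).Subsingleton := by
  obtain ⟨C⟩ := hcol
  intro u hu v hv
  rw [mem_commonNeighbors] at hu hv
  by_contra huv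
  have same_color : ∀ {a b w}, G.Adj a w → G.Adj b w → C a = C b := fun ha hb => by
    have := C.valid ha; have := C.valid hb; omega
  have hxy' : ¬ G.Adj x y := fun h => C.valid h (same_color hu.1 hu.2)
  have huv' : ¬ G.Adj u v := fun h => C.valid h (same_color hu.1.symm hv.1.symm)
  have := hu.1.ne; have := hu.2.ne; have := hv.1.ne; have := hv.2.ne
  let w : Fin 4 → V := ![x, u, y, v]
  refine not_avoids_of_embedding ⟨⟨w, fun a b hab => ?_⟩, fun {a b} => ?_⟩
    (fun a => ⟨a + 1, by fin_cases a <;> exact Or.inl rfl⟩) hav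
  · fin_cases a <;> fin_cases b <;> simp_all [w, eq_comm]
  · show G.Adj (w a) (w b) ↔ cycleC4.Adj a b
    fin_cases a <;> fin_cases b <;> simp_all [w, cycleC4, adj_comm]

theorem avoids_cycleC4_of_commonNeighbors_subsingleton {V : Type} {G : SimpleGraph V}
    (h : ∀ x y, x ≠ y → (G.commonNeighbors x y).Subsingleton) : Avoids G cycleC4 := by
  refine ⟨fun φ => ?_⟩
  have adj : ∀ a b : Fin 4, cycleC4.Adj a b → G.Adj (φ a) (φ b) := fun _ _ hab =>
    φ.map_rel_iff.2 hab
  have hne : ∀ a b : Fin 4, a ≠ b → (φ a : V) ≠ φ b := fun a b hab h' =>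
    hab (φ.injective (Subtype.ext h'))
  exact hne 1 3 (by decide) <| h (φ 0) (φ 2) (hne 0 2 (by decide))
    ⟨adj 0 1 (.inl rfl), adj 2 1 (.inr rfl)⟩ ⟨adj 0 3 (.inr rfl), adj 2 3 (.inl rfl)⟩

section CommonNeighbors

variable {V : Type*} [Fintype V] {G : SimpleGraph V} [DecidableRel G.Adj]

theorem sum_card_offDiag_neighborFinset_le
    (h : ∀ x y, x ≠ y → (G.commonNeighbors x y).Subsingleton) :
    ∑ v, #(G.neighborFinset v).offDiag ≤ #(univ : Finset V).offDiag := by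
  let r : V → V × V → Prop := fun v e => G.Adj v e.1 ∧ G.Adj v e.2
  calc ∑ v, #(G.neighborFinset v).offDiag
      = ∑ v, #(bipartiteAbove r univ.offDiag v) := by
        congr! with v
        ext e
        simp only [mem_offDiag, mem_neighborFinset, mem_bipartiteAbove, mem_univ, true_and, r]
        tauto
    _ = ∑ e ∈ univ.offDiag, #(bipartiteBelow r univ e) :=
        sum_card_bipartiteAbove_eq_sum_card_bipartiteBelow r
    _ ≤ ∑ e ∈ univ.offDiag, 1 := sum_le_sum fun e he => card_le_one.2 fun a ha b hb => by
        rw [mem_bipartiteBelow] at ha hb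
        exact h e.1 e.2 (mem_offDiag.1 he).2.2 ⟨ha.2.1.symm, ha.2.2.symm⟩
          ⟨hb.2.1.symm, hb.2.2.symm⟩
    _ = #(univ : Finset V).offDiag := by rw [card_eq_sum_ones]

theorem sum_degree_sq_add_card_le (h : ∀ x y, x ≠ y → (G.commonNeighbors x y).Subsingleton) :
    ∑ v, G.degree v ^ 2 + Fintype.card V ≤ Fintype.card V ^ 2 + 2 * #G.edgeFinset := by
  have hsq : ∀ v, G.degree v ^ 2 = #(G.neighborFinset v).offDiag + G.degree v := fun v => by
    rw [offDiag_card, card_neighborFinset_eq_degree, sq, Nat.sub_add_cancel (Nat.le_mul_self _)]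
  have hoff := sum_card_offDiag_neighborFinset_le h
  rw [offDiag_card, card_univ] at hoff
  rw [sum_congr rfl fun v _ => hsq v, sum_add_distrib, sum_degrees_eq_twice_card_edges, sq]
  have := Nat.le_mul_self (Fintype.card V)
  omega

theorem card_edgeFinset_le_of_commonNeighbors_subsingleton
    (h : ∀ x y, x ≠ y → (G.commonNeighbors x y).Subsingleton) :
    (#G.edgeFinset : ℝ) ≤ Fintype.card V * √(Fintype.card V) := by
  have hdeg : ∑ v, (G.degree v : ℝ) ^ 2 + Fintype.card V ≤
      (Fintype.card V : ℝ) ^ 2 + 2 * #G.edgeFinset := by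
    exact_mod_cast sum_degree_sq_add_card_le h
  have hcs : (2 * (#G.edgeFinset : ℝ)) ^ 2 ≤ Fintype.card V * ∑ v, (G.degree v : ℝ) ^ 2 := by
    have := sq_sum_le_card_mul_sum_sq (s := univ) (f := fun v => (G.degree v : ℝ))
    rwa [← Nat.cast_sum, sum_degrees_eq_twice_card_edges, card_univ, Nat.cast_mul,
      Nat.cast_ofNat] at this
  have hn : (Fintype.card V : ℝ) = 0 ∨ 1 ≤ (Fintype.card V : ℝ) := by
    rcases Nat.eq_zero_or_pos (Fintype.card V) with h0 | h0
    · exact .inl (by simp [h0])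
    · exact .inr (by exact_mod_cast h0)
  have hm : 0 ≤ (#G.edgeFinset : ℝ) := Nat.cast_nonneg _
  generalize (Fintype.card V : ℝ) = n, (#G.edgeFinset : ℝ) = m,
    ∑ v, (G.degree v : ℝ) ^ 2 = S at *
  have hn0 : 0 ≤ n := by rcases hn with rfl | h1 <;> linarith
  by_contra! hlt
  have hnm : n ≤ m := by
    rcases hn with rfl | h1
    · exact hm
    · nlinarith [Real.one_le_sqrt.2 h1]
  nlinarith [mul_le_mul_of_nonneg_left hdeg hn0, Real.sq_sqrt hn0,
    mul_self_lt_mul_self (mul_nonneg hn0 (Real.sqrt_nonneg n)) hlt]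

end CommonNeighbors

theorem choose_two_le_sum_card_edgeFinset {V ι : Type*} [Fintype V] [DecidableEq V] [Fintype ι]
    (P : ι → SimpleGraph V) [∀ j, DecidableRel (P j).Adj]
    (hcover : ∀ e ∈ (⊤ : SimpleGraph V).edgeSet, ∃ j, e ∈ (P j).edgeSet) :
    (Fintype.card V).choose 2 ≤ ∑ j, #(P j).edgeFinset := by
  rw [← card_edgeFinset_top_eq_card_choose_two]
  refine (card_le_card fun e he => ?_).trans card_biUnion_le
  obtain ⟨j, hj⟩ := hcover e (mem_edgeFinset.1 he)
  exact mem_biUnion.2 ⟨j, mem_univ _, mem_edgeFinset.2 hj⟩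

theorem sqrt_div_four_le_of_isBipartitePartition {n k : ℕ} (hn : 2 ≤ n)
    {P : Fin k → SimpleGraph (Fin n)} (hP : IsBipartitePartition n k P)
    (hav : ∀ j, Avoids (P j) cycleC4) : 1 / 4 * √n ≤ k := by
  classical
  have hedges : ∀ j, (#(P j).edgeFinset : ℝ) ≤ n * √n := fun j => by
    simpa using card_edgeFinset_le_of_commonNeighbors_subsingleton fun x y hxy =>
      commonNeighbors_subsingleton_of_avoids_cycleC4 (hP.1 j) (hav j) hxy
  have hcount : n.choose 2 ≤ ∑ j, #(P j).edgeFinset := by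
    simpa using choose_two_le_sum_card_edgeFinset P fun e he => (hP.2 e he).exists
  have htotal : (n : ℝ) * (n - 1) / 2 ≤ k * (n * √n) :=
    calc (n : ℝ) * (n - 1) / 2 = (n.choose 2 : ℕ) := (Nat.cast_choose_two ℝ n).symm
      _ ≤ ∑ j, (#(P j).edgeFinset : ℝ) := by exact_mod_cast hcount
      _ ≤ ∑ _j : Fin k, (n : ℝ) * √n := sum_le_sum fun j _ => hedges j
      _ = k * (n * √n) := by simp
  have hn2 : (2 : ℝ) ≤ n := by exact_mod_cast hn
  have hs : √(n : ℝ) * √n = n := Real.mul_self_sqrt (by positivity)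
  have hs0 : 0 < √(n : ℝ) := Real.sqrt_pos.2 (by positivity)
  have hquarter : (n : ℝ) / 4 ≤ k * √n :=
    le_of_mul_le_mul_left (by nlinarith) (by positivity : (0 : ℝ) < n)
  exact le_of_mul_le_mul_left (by nlinarith) hs0

section Parabola

variable {R : Type*} [CommRing R]

def parabolaClass (d : R × R) : R := d.2 - d.1 ^ 2

theorem eq_or_eq_of_parabolaClass_sub_eq [NoZeroDivisors R] (h2 : (2 : R) ≠ 0)
    {x y u v : R × R} {c : R}
    (hxu : parabolaClass (u - x) = c) (hxv : parabolaClass (v - x) = c)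
    (hyu : parabolaClass (u - y) = c) (hyv : parabolaClass (v - y) = c) : x = y ∨ u = v := by
  obtain ⟨x₁, x₂⟩ := x
  obtain ⟨y₁, y₂⟩ := y
  obtain ⟨u₁, u₂⟩ := u
  obtain ⟨v₁, v₂⟩ := v
  simp only [parabolaClass, Prod.mk_sub_mk] at hxu hxv hyu hyv
  have key : 2 * ((x₁ - y₁) * (u₁ - v₁)) = 0 := by
    linear_combination hxu - hxv - hyu + hyv
  rcases mul_eq_zero.1 ((mul_eq_zero.1 key).resolve_left h2) with h | h
  · left
    obtain rfl : x₁ = y₁ := sub_eq_zero.1 h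
    obtain rfl : x₂ = y₂ := by linear_combination hyu - hxu
    rfl
  · right
    obtain rfl : u₁ = v₁ := sub_eq_zero.1 h
    obtain rfl : u₂ = v₂ := by linear_combination hxu - hxv
    rfl

end Parabola

def digitPair (p a : ℕ) : ZMod p × ZMod p := (a, a / p)

theorem digitPair_injOn (p : ℕ) : Set.InjOn (digitPair p) (Set.Iio (p ^ 2)) := by
  intro a ha b hb h
  have hdiv_lt : ∀ x ∈ Set.Iio (p ^ 2), x / p < p := fun x hx =>
    Nat.div_lt_of_lt_mul (by rw [← sq]; exact hx)
  simp only [digitPair, Prod.mk.injEq] at h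
  have hmod := congrArg ZMod.val h.1
  have hdiv := congrArg ZMod.val h.2
  simp only [ZMod.val_natCast, Nat.mod_eq_of_lt (hdiv_lt a ha),
    Nat.mod_eq_of_lt (hdiv_lt b hb)] at hmod hdiv
  exact Nat.ext_div_mod hdiv hmod

def highBit (a b : ℕ) : ℕ := Nat.log 2 (a ^^^ b)

theorem highBit_comm (a b : ℕ) : highBit a b = highBit b a := by
  rw [highBit, highBit, Nat.xor_comm]

theorem highBit_lt_log_succ {a b n : ℕ} (ha : a < n) (hb : b < n) :
    highBit a b < Nat.log 2 n + 1 :=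
  Nat.log_lt_of_lt_pow' (Nat.succ_ne_zero _) <| Nat.xor_lt_two_pow
    (ha.trans (Nat.lt_pow_succ_log_self one_lt_two n))
    (hb.trans (Nat.lt_pow_succ_log_self one_lt_two n))

theorem xor_div_two_pow_highBit {a b : ℕ} (h : a ≠ b) :
    a / 2 ^ highBit a b ^^^ b / 2 ^ highBit a b = 1 := by
  have hx : a ^^^ b ≠ 0 := fun h' => h (Nat.eq_of_xor_eq_zero h')
  rw [← Nat.xor_div_two_pow, highBit]
  apply Nat.div_eq_of_lt_le
  · simpa using Nat.pow_log_le_self 2 hx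
  · simpa [pow_succ, mul_comm] using Nat.lt_pow_succ_log_self one_lt_two (a ^^^ b)

theorem div_two_pow_highBit_of_lt {a b : ℕ} (h : a < b) :
    a / 2 ^ highBit a b % 2 = 0 ∧ b / 2 ^ highBit a b = a / 2 ^ highBit a b + 1 := by
  have hx := xor_div_two_pow_highBit h.ne
  set q := a / 2 ^ highBit a b
  set r := b / 2 ^ highBit a b
  have hqr : q ≤ r := Nat.div_le_div_right h.le
  have hne : q ≠ r := by rintro hqr; simp [hqr] at hx
  have hhalf : q / 2 = r / 2 := by
    have := congrArg (· / 2 ^ 1) hx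
    rw [Nat.xor_div_two_pow] at this
    simpa using this
  omega

def levelGraph (n p i : ℕ) (c : ZMod p) : SimpleGraph (Fin n) where
  Adj u v := u ≠ v ∧ highBit u v = i ∧
    parabolaClass (digitPair p (max u.val v % 2 ^ i) - digitPair p (min u.val v % 2 ^ i)) = c
  symm := ⟨fun u v ⟨hne, hi, hc⟩ =>
    ⟨hne.symm, highBit_comm u v ▸ hi, by rwa [max_comm, min_comm]⟩⟩
  loopless := ⟨fun _ h => h.1 rfl⟩

namespace levelGraph

variable {n p i : ℕ} {c : ZMod p} {u v : Fin n}

theorem of_adj_of_lt (h : (levelGraph n p i c).Adj u v) (huv : u < v) :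
    u.val / 2 ^ i % 2 = 0 ∧ v.val / 2 ^ i = u.val / 2 ^ i + 1 ∧
      parabolaClass (digitPair p (v % 2 ^ i) - digitPair p (u % 2 ^ i)) = c := by
  obtain ⟨-, rfl, hc⟩ := h
  replace huv : u.val < v.val := huv
  rw [max_eq_right huv.le, min_eq_left huv.le] at hc
  exact ⟨(div_two_pow_highBit_of_lt huv).1, (div_two_pow_highBit_of_lt huv).2, hc⟩

theorem div_two_pow_mod_two_ne (h : (levelGraph n p i c).Adj u v) :
    u.val / 2 ^ i % 2 ≠ v.val / 2 ^ i % 2 := by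
  rcases h.ne.lt_or_gt with huv | hvu
  · have := of_adj_of_lt h huv
    omega
  · have := of_adj_of_lt h.symm hvu
    omega

theorem lt_iff_mod_two_eq_zero (h : (levelGraph n p i c).Adj u v) :
    u < v ↔ u.val / 2 ^ i % 2 = 0 := by
  refine ⟨fun huv => (of_adj_of_lt h huv).1, fun hu => ?_⟩
  by_contra hvu
  have := of_adj_of_lt h.symm (h.ne.symm.lt_of_le (not_lt.1 hvu))
  omega

theorem colorable : (levelGraph n p i c).Colorable 2 :=
  ⟨Coloring.mk (fun u => ⟨u.val / 2 ^ i % 2, Nat.mod_lt _ two_pos⟩)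
    fun h => by simpa [Fin.ext_iff] using div_two_pow_mod_two_ne h⟩

theorem eq_or_eq_of_lt [Fact p.Prime] (hp : p ≠ 2) (hn : n ≤ p ^ 2) {x y : Fin n}
    (hxu : x < u) (hxv : x < v) (hyu : y < u) (hyv : y < v)
    (axu : (levelGraph n p i c).Adj x u) (axv : (levelGraph n p i c).Adj x v)
    (ayu : (levelGraph n p i c).Adj y u) (ayv : (levelGraph n p i c).Adj y v) :
    x = y ∨ u = v := by
  have h2 : (2 : ZMod p) ≠ 0 := Ring.two_ne_zero (by rwa [ZMod.ringChar_zmod_n])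
  have eq_of_low_eq : ∀ a b : Fin n, a.val / 2 ^ i = b.val / 2 ^ i →
      digitPair p (a % 2 ^ i) = digitPair p (b % 2 ^ i) → a = b := fun a b hdiv hlow =>
    Fin.ext <| Nat.ext_div_mod hdiv <| digitPair_injOn p
      ((Nat.mod_le _ _).trans_lt (a.isLt.trans_le hn))
      ((Nat.mod_le _ _).trans_lt (b.isLt.trans_le hn)) hlow
  obtain ⟨-, dxu, cxu⟩ := of_adj_of_lt axu hxu
  obtain ⟨-, dxv, cxv⟩ := of_adj_of_lt axv hxv
  obtain ⟨-, dyu, cyu⟩ := of_adj_of_lt ayu hyu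
  obtain ⟨-, dyv, cyv⟩ := of_adj_of_lt ayv hyv
  exact (eq_or_eq_of_parabolaClass_sub_eq h2 cxu cxv cyu cyv).imp
    (eq_of_low_eq x y (by omega)) (eq_of_low_eq u v (by omega))

theorem commonNeighbors_subsingleton [Fact p.Prime] (hp : p ≠ 2) (hn : n ≤ p ^ 2) {x y : Fin n}
    (hxy : x ≠ y) : ((levelGraph n p i c).commonNeighbors x y).Subsingleton := by
  intro u hu v hv
  rw [mem_commonNeighbors] at hu hv
  have lt_of_adj : ∀ {a b}, (levelGraph n p i c).Adj a b → a.val / 2 ^ i % 2 = 0 → a < b :=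
    fun h => (lt_iff_mod_two_eq_zero h).2
  have := div_two_pow_mod_two_ne hu.1
  have := div_two_pow_mod_two_ne hu.2
  have := div_two_pow_mod_two_ne hv.1
  by_cases hx : x.val / 2 ^ i % 2 = 0
  · have hy : y.val / 2 ^ i % 2 = 0 := by omega
    exact (eq_or_eq_of_lt hp hn (lt_of_adj hu.1 hx) (lt_of_adj hv.1 hx) (lt_of_adj hu.2 hy)
      (lt_of_adj hv.2 hy) hu.1 hv.1 hu.2 hv.2).resolve_left hxy
  · have hu' : u.val / 2 ^ i % 2 = 0 := by omega
    have hv' : v.val / 2 ^ i % 2 = 0 := by omega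
    exact (eq_or_eq_of_lt hp hn (lt_of_adj hu.1.symm hu') (lt_of_adj hu.2.symm hu')
      (lt_of_adj hv.1.symm hv') (lt_of_adj hv.2.symm hv') hu.1.symm hu.2.symm hv.1.symm
      hv.2.symm).resolve_right hxy

end levelGraph

theorem isBipartitePartition_of_adj_iff {n k : ℕ} {ι : Type*} (σ : Fin k ≃ ι)
    (G : ι → SimpleGraph (Fin n)) (col : Fin n → Fin n → ι)
    (hG : ∀ j u v, (G j).Adj u v ↔ u ≠ v ∧ col u v = j) (hcol : ∀ j, (G j).Colorable 2) :
    IsBipartitePartition n k (G ∘ σ) := by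
  refine ⟨fun j => hcol (σ j), fun e he => ?_⟩
  induction e using Sym2.ind with
  | _ u v =>
    rw [mem_edgeSet, top_adj] at he
    refine ⟨σ.symm (col u v), by simp [hG, he], fun j hj => ?_⟩
    simp only [Function.comp_apply, mem_edgeSet, hG] at hj
    simp [hj.2]

theorem exists_isBipartitePartition_levelGraph {n p : ℕ} [Fact p.Prime] (hp : p ≠ 2)
    (hn : n ≤ p ^ 2) :
    ∃ P : Fin ((Nat.log 2 n + 1) * p) → SimpleGraph (Fin n),
      IsBipartitePartition n _ P ∧ ∀ j, Avoids (P j) cycleC4 := by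
  let σ : Fin ((Nat.log 2 n + 1) * p) ≃ Fin (Nat.log 2 n + 1) × ZMod p :=
    (Fintype.equivFinOfCardEq (by simp)).symm
  refine ⟨_, isBipartitePartition_of_adj_iff σ (fun j => levelGraph n p j.1 j.2)
    (fun u v => (⟨highBit u v, highBit_lt_log_succ u.isLt v.isLt⟩,
      parabolaClass (digitPair p (max u.val v % 2 ^ highBit u v) -
        digitPair p (min u.val v % 2 ^ highBit u v))))
    (fun j u v => ?_) (fun _ => levelGraph.colorable),
    fun j => avoids_cycleC4_of_commonNeighbors_subsingleton
      fun _ _ => levelGraph.commonNeighbors_subsingleton hp hn⟩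
  simp only [levelGraph, Prod.ext_iff, Fin.ext_iff]
  constructor <;> rintro ⟨hne, hi, hc⟩ <;> simp_all

theorem exists_prime_ne_two_le_sq {n : ℕ} (hn : 4 ≤ n) :
    ∃ p, p.Prime ∧ p ≠ 2 ∧ n ≤ p ^ 2 ∧ (p : ℝ) ≤ 2 * √n := by
  have hs : 2 ≤ Nat.sqrt n := Nat.le_sqrt.2 hn
  obtain ⟨p, hp, hlt, hle⟩ := Nat.exists_prime_lt_and_le_two_mul (Nat.sqrt n) (by omega)
  refine ⟨p, hp, by omega, (Nat.lt_succ_sqrt' n).le.trans (Nat.pow_le_pow_left hlt 2), ?_⟩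
  calc (p : ℝ) ≤ 2 * Nat.sqrt n := by exact_mod_cast hle
    _ ≤ 2 * √n := by gcongr; exact Real.nat_sqrt_le_real_sqrt

theorem natLog_two_add_one_le {n : ℕ} (hn : 3 ≤ n) : (Nat.log 2 n + 1 : ℝ) ≤ 3 * Real.log n := by
  have hlog : (Nat.log 2 n : ℝ) ≤ Real.log n / Real.log 2 := Real.natLog_le_logb n 2
  have hlog2 : 1 / 2 < Real.log 2 := by linarith [Real.log_two_gt_d9]
  have hlogn : 1 ≤ Real.log n := by
    rw [Real.le_log_iff_exp_le (by positivity)]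
    have : (3 : ℝ) ≤ n := by exact_mod_cast hn
    linarith [Real.exp_one_lt_d9]
  have : Real.log n / Real.log 2 ≤ 2 * Real.log n := by
    rw [div_le_iff₀ (by linarith)]
    nlinarith
  linarith

/-- `a·√n ≤ χ'_{C₄}(n) ≤ b·√n·log n` for large `n`. -/
theorem C4_free_partition_bounds :
    ∃ a b : ℝ, 0 < a ∧ 0 < b ∧ ∃ N : ℕ, ∀ n : ℕ, N ≤ n →
      (∀ (k : ℕ) (P : Fin k → SimpleGraph (Fin n)),
        IsBipartitePartition n k P → (∀ i, Avoids (P i) cycleC4) →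
          a * Real.sqrt n ≤ (k : ℝ)) ∧
      (∃ (k : ℕ) (P : Fin k → SimpleGraph (Fin n)),
        IsBipartitePartition n k P ∧ (∀ i, Avoids (P i) cycleC4) ∧
          (k : ℝ) ≤ b * Real.sqrt n * Real.log n) := by
  refine ⟨1 / 4, 6, by norm_num, by norm_num, 4, fun n hn => ⟨fun k P hP hav =>
    sqrt_div_four_le_of_isBipartitePartition (by omega) hP hav, ?_⟩⟩
  obtain ⟨p, hp, hp2, hnp, hpn⟩ := exists_prime_ne_two_le_sq hn
  have := Fact.mk hp
  obtain ⟨P, hP, hav⟩ := exists_isBipartitePartition_levelGraph hp2 hnp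
  refine ⟨_, P, hP, hav, ?_⟩
  have hlog := natLog_two_add_one_le (n := n) (by omega)
  calc (((Nat.log 2 n + 1) * p : ℕ) : ℝ) = (Nat.log 2 n + 1 : ℝ) * p := by push_cast; ring
    _ ≤ 3 * Real.log n * (2 * √n) :=
        mul_le_mul hlog hpn (by positivity) ((by positivity : (0 : ℝ) ≤ _).trans hlog)
    _ = 6 * √n * Real.log n := by ring
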